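/- Let (L, ∗, α) be a left Hom-Leibniz superalgebra and define the supercommutator [x,y] := x∗y − (−1)^{|x||y|} y∗x. Then for all homogeneous x, y, z ∈ L: ↻_{(x,y,z)}(−1)^{|x||z|}[[x,y],α(z)] = ↻_{(x,y,z)}(−1)^{|x||z|}(x∗y)∗α(z), where ↻_{(x,y,z)}(−1)^{|x||z|}F(x,y,z) denotes the graded cyclic sum (−1)^{|x||z|}F(x,y,z) + (−1)^{|y||x|}F(y,z,x) + (−1)^{|z||y|}F(z,x,y). -/

import Mathlib

/-!
Expanding the supercommutators gives the Hom-Akivis identity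
`↻ (−1)^{|x||z|} [[x,y],α(z)] = ↻ (−1)^{|x||z|} (as_α(x,y,z) − (−1)^{|x||y|} as_α(y,x,z))`,
which holds in every Hom-superalgebra. In a left Hom-Leibniz superalgebra the Leibniz identity
for `(x,y,z)` and `(y,x,z)` shows that `(x∗y)∗α(z) = −(−1)^{|x||y|} (y∗x)∗α(z)`; together with the
Leibniz identity itself this reduces each summand `as_α(x,y,z) − (−1)^{|x||y|} as_α(y,x,z)`
to `(x∗y)∗α(z)`.
-/

/-- A (multiplicative) Hom-superalgebra: a `ℤ/2`-graded `K`-vector space `L = L₀ ⊕ L₁`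
with a parity-respecting bilinear operation `op` and an even multiplicative linear map `map`. -/
structure HomSuperalgebra (K : Type*) [Field K] (L : Type*) [AddCommGroup L] [Module K L] where
  grading : ZMod 2 → Submodule K L
  internal : DirectSum.IsInternal grading
  op : L →ₗ[K] L →ₗ[K] L
  op_mem : ∀ {i j : ZMod 2} {x y : L}, x ∈ grading i → y ∈ grading j → op x y ∈ grading (i + j)
  map : L →ₗ[K] L
  map_even : ∀ {i : ZMod 2} {x : L}, x ∈ grading i → map x ∈ grading i
  map_op : ∀ x y : L, map (op x y) = op (map x) (map y)

namespace HomSuperalgebra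

variable {K : Type*} [Field K] {L : Type*} [AddCommGroup L] [Module K L]

/-- The sign `(−1)^{ij}` attached to parities `i, j`. -/
def sgn (K : Type*) [Field K] (i j : ZMod 2) : K := (-1 : K) ^ (i.val * j.val)

/-- The supercommutator `[x,y] := x∗y − (−1)^{|x||y|} y∗x` of homogeneous elements
of parities `i` and `j`. -/
def br (A : HomSuperalgebra K L) (i j : ZMod 2) (x y : L) : L :=
  A.op x y - sgn K i j • A.op y x

/-- The Hom-associator `as_α(x,y,z) := (x∗y)∗α(z) − α(x)∗(y∗z)`. -/
def assoc (A : HomSuperalgebra K L) (x y z : L) : L :=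
  A.op (A.op x y) (A.map z) - A.op (A.map x) (A.op y z)

/-- The ternary operation `{x,y,z} := −(x∗y)∗α(z)`. -/
def trip (A : HomSuperalgebra K L) (x y z : L) : L :=
  -(A.op (A.op x y) (A.map z))

/-- The left Hom-Leibniz superidentity:
`α(x)∗(y∗z) = (x∗y)∗α(z) + (−1)^{|x||y|} α(y)∗(x∗z)` for homogeneous `x, y, z`. -/
def IsLeftLeibniz (A : HomSuperalgebra K L) : Prop :=
  ∀ (i j k : ZMod 2) (x y z : L),
    x ∈ A.grading i → y ∈ A.grading j → z ∈ A.grading k →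
      A.op (A.map x) (A.op y z)
        = A.op (A.op x y) (A.map z) + sgn K i j • A.op (A.map y) (A.op x z)

end HomSuperalgebra

namespace HomSuperalgebra

variable {K : Type*} [Field K] {L : Type*} [AddCommGroup L] [Module K L]

theorem sgn_comm (i j : ZMod 2) : sgn K i j = sgn K j i := by
  rw [sgn, sgn, mul_comm]

theorem sgn_mul_self (i j : ZMod 2) : sgn K i j * sgn K i j = 1 := by
  rw [sgn, ← mul_pow, neg_one_mul, neg_neg, one_pow]

theorem sgn_add_left (i j k : ZMod 2) : sgn K (i + j) k = sgn K i k * sgn K j k := by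
  rw [sgn, sgn, sgn, ← pow_add, ← add_mul, ZMod.val_add, neg_one_pow_eq_pow_mod_two,
    Nat.mod_mul_mod, ← neg_one_pow_eq_pow_mod_two]

theorem cyclic_sum_br_eq_cyclic_sum_assoc (A : HomSuperalgebra K L) (i j k : ZMod 2)
    (x y z : L) :
    sgn K i k • A.br (i + j) k (A.br i j x y) (A.map z)
      + sgn K j i • A.br (j + k) i (A.br j k y z) (A.map x)
      + sgn K k j • A.br (k + i) j (A.br k i z x) (A.map y)
    = sgn K i k • (A.assoc x y z - sgn K i j • A.assoc y x z)
      + sgn K j i • (A.assoc y z x - sgn K j k • A.assoc z y x)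
      + sgn K k j • (A.assoc z x y - sgn K k i • A.assoc x z y) := by
  simp only [br, assoc, map_sub, map_smul, LinearMap.sub_apply, LinearMap.smul_apply,
    sgn_add_left]
  rw [sgn_comm j i, sgn_comm k j, sgn_comm i k]
  have hij := sgn_mul_self (K := K) i j
  have hjk := sgn_mul_self (K := K) j k
  have hki := sgn_mul_self (K := K) k i
  -- each coefficient is a monomial in the three signs, so `s * s = 1` settles it
  match_scalars <;> grind

namespace IsLeftLeibniz

variable {A : HomSuperalgebra K L} {i j k : ZMod 2} {x y z : L}

theorem op_op_map_comm (hL : A.IsLeftLeibniz) (hx : x ∈ A.grading i) (hy : y ∈ A.grading j)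
    (hz : z ∈ A.grading k) :
    A.op (A.op x y) (A.map z) = -(sgn K i j • A.op (A.op y x) (A.map z)) := by
  have hxy := hL i j k x y z hx hy hz
  have hyx := hL j i k y x z hy hx hz
  rw [sgn_comm j i] at hyx
  rw [hyx, smul_add, smul_smul, sgn_mul_self, one_smul] at hxy
  linear_combination (norm := module) -hxy

theorem assoc_sub_sgn_smul_assoc (hL : A.IsLeftLeibniz) (hx : x ∈ A.grading i)
    (hy : y ∈ A.grading j) (hz : z ∈ A.grading k) :
    A.assoc x y z - sgn K i j • A.assoc y x z = A.op (A.op x y) (A.map z) := by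
  have hxy := hL i j k x y z hx hy hz
  have hcomm := hL.op_op_map_comm hx hy hz
  rw [assoc, assoc]
  linear_combination (norm := module) -hcomm - hxy

end IsLeftLeibniz

end HomSuperalgebra

open HomSuperalgebra

variable {K : Type*} [Field K] {L : Type*} [AddCommGroup L] [Module K L]

/-- in a left Hom-Leibniz superalgebra the graded cyclic sum of
`[[x,y],α(z)]` equals the graded cyclic sum of `(x∗y)∗α(z)`. -/
theorem akivis_identity_of_leftLeibniz (A : HomSuperalgebra K L) (hL : A.IsLeftLeibniz)
    (i j k : ZMod 2) (x y z : L)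
    (hx : x ∈ A.grading i) (hy : y ∈ A.grading j) (hz : z ∈ A.grading k) :
    sgn K i k • A.br (i + j) k (A.br i j x y) (A.map z)
      + sgn K j i • A.br (j + k) i (A.br j k y z) (A.map x)
      + sgn K k j • A.br (k + i) j (A.br k i z x) (A.map y)
    = sgn K i k • A.op (A.op x y) (A.map z)
      + sgn K j i • A.op (A.op y z) (A.map x)
      + sgn K k j • A.op (A.op z x) (A.map y) := by
  rw [cyclic_sum_br_eq_cyclic_sum_assoc, hL.assoc_sub_sgn_smul_assoc hx hy hz,
    hL.assoc_sub_sgn_smul_assoc hy hz hx, hL.assoc_sub_sgn_smul_assoc hz hx hy]
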